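/- Let ϖ : Y → X be a Galois factor between irreducible SFTs with Galois group G = Gal(Y/X, ϖ), and let (Z₁, α₁, β₁), (Z₂, α₂, β₂) be unramified intermediate factors of ϖ. Then (Z₁, α₁, β₁) and (Z₂, α₂, β₂) are topologically conjugate as intermediate factors (there is a shift-commuting homeomorphism f : Z₁ → Z₂ with f ∘ α₁ = α₂ and β₁ = β₂ ∘ f) if and only if Aut(Y/Z₁, α₁) = Aut(Y/Z₂, α₂) as subgroups of Aut(Y). -/

import Mathlib

open Function Set

/-- The shift map on bi-infinite sequences. -/
def shiftMap (A : Type*) : (ℤ → A) → (ℤ → A) := fun x i => x (i + 1)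

/-- A (two-sided) subshift over an alphabet `A`: a closed, shift-invariant subset of the
full shift `A^ℤ` on which the shift is onto. -/
structure Subshift (A : Type*) [TopologicalSpace A] where
  carrier : Set (ℤ → A)
  isClosed' : IsClosed carrier
  shift_mem' : ∀ x ∈ carrier, shiftMap A x ∈ carrier
  shift_surjOn' : ∀ x ∈ carrier, ∃ y ∈ carrier, shiftMap A y = x

/-- The shift map restricted to a subshift. -/
def Subshift.σ {A : Type*} [TopologicalSpace A] (X : Subshift A) : X.carrier → X.carrier :=
  fun x => ⟨shiftMap A x.1, X.shift_mem' x.1 x.2⟩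

/-- `X` is a shift of finite type: membership is determined by a finite-window rule. -/
def Subshift.IsSFT {A : Type*} [TopologicalSpace A] (X : Subshift A) : Prop :=
  ∃ (n : ℕ) (W : Set (Fin n → A)),
    X.carrier = {x | ∀ i : ℤ, (fun k : Fin n => x (i + (k.val : ℤ))) ∈ W}

/-- Irreducibility (= topological transitivity) of a subshift. -/
def Subshift.Irreducible {A : Type*} [TopologicalSpace A] (X : Subshift A) : Prop :=
  ∀ U V : Set X.carrier, IsOpen U → IsOpen V → U.Nonempty → V.Nonempty →
    ∃ n : ℕ, (X.σ^[n] '' U ∩ V).Nonempty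

/-- A factor map between subshifts: a continuous, shift-commuting surjection. -/
structure IsFactorMap {A B : Type*} [TopologicalSpace A] [TopologicalSpace B]
    (Y : Subshift B) (X : Subshift A) (ϖ : Y.carrier → X.carrier) : Prop where
  continuous : Continuous ϖ
  commutes : ∀ y, ϖ (Y.σ y) = X.σ (ϖ y)
  surjective : Function.Surjective ϖ

/-- An unramified (constant-to-one) factor map of degree `d`. -/
def IsUnramified {A B : Type*} [TopologicalSpace A] [TopologicalSpace B]
    (Y : Subshift B) (X : Subshift A) (ϖ : Y.carrier → X.carrier) (d : ℕ) : Prop :=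
  IsFactorMap Y X ϖ ∧ ∀ x : X.carrier, (ϖ ⁻¹' {x}).Finite ∧ (ϖ ⁻¹' {x}).ncard = d

/-- The relative automorphism group `Aut(Y/X, ϖ)`: shift-commuting self-homeomorphisms of `Y`
over `X`. -/
def relAut {A B : Type*} [TopologicalSpace A] [TopologicalSpace B]
    (Y : Subshift B) (X : Subshift A) (ϖ : Y.carrier → X.carrier) :
    Subgroup (Equiv.Perm Y.carrier) where
  carrier := {φ | Continuous φ ∧ Continuous (φ⁻¹ : Equiv.Perm Y.carrier) ∧
    (∀ y, φ (Y.σ y) = Y.σ (φ y)) ∧ ∀ y, ϖ (φ y) = ϖ y}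
  one_mem' := ⟨by simpa using continuous_id, by simpa using continuous_id,
    fun _ => by simp, fun _ => by simp⟩
  mul_mem' := by
    rintro φ ψ ⟨hc, hci, hcomm, hrel⟩ ⟨hc', hci', hcomm', hrel'⟩
    refine ⟨?_, ?_, fun y => ?_, fun y => ?_⟩
    · simpa [Equiv.Perm.coe_mul] using hc.comp hc'
    · simpa [mul_inv_rev, Equiv.Perm.coe_mul] using hci'.comp hci
    · simp [Equiv.Perm.mul_apply, hcomm, hcomm']
    · simp [Equiv.Perm.mul_apply, hrel, hrel']
  inv_mem' := by
    rintro φ ⟨hc, hci, hcomm, hrel⟩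
    refine ⟨hci, by simpa using hc, fun y => φ.injective ?_, fun y => ?_⟩
    · simp [hcomm, (Equiv.apply_symm_apply φ _ : φ (φ⁻¹ _) = _)]
    · conv_rhs => rw [← (Equiv.apply_symm_apply φ y : φ (φ⁻¹ y) = y)]
      exact (hrel _).symm

/-- A pointed Galois factor of degree `d` over a pointed subshift `(X, x₀)`. -/
def IsPointedGaloisFactor {A B : Type*} [TopologicalSpace A] [TopologicalSpace B]
    (Y : Subshift B) (y₀ : Y.carrier) (X : Subshift A) (x₀ : X.carrier)
    (ϖ : Y.carrier → X.carrier) (d : ℕ) : Prop :=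
  Y.IsSFT ∧ Y.Irreducible ∧ ϖ y₀ = x₀ ∧ IsUnramified Y X ϖ d ∧
    Nat.card (relAut Y X ϖ) = d

/-- The full shift on an alphabet `A`. -/
def fullShift (A : Type*) [TopologicalSpace A] : Subshift A where
  carrier := Set.univ
  isClosed' := isClosed_univ
  shift_mem' := fun _ _ => Set.mem_univ _
  shift_surjOn' := fun x _ => ⟨fun i => x (i - 1), Set.mem_univ _, by
    funext i; simp [shiftMap]⟩

section Aux
set_option linter.unusedSectionVars false
open Subshift

variable {A : Type*} [TopologicalSpace A] [DiscreteTopology A] [Finite A]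

/-- shift by `c` -/
def shiftZ {A : Type*} (c : ℤ) (x : ℤ → A) : ℤ → A := fun j => x (j + c)

lemma shiftZ_shiftZ {A : Type*} (a b : ℤ) (x : ℤ → A) :
    shiftZ a (shiftZ b x) = shiftZ (a + b) x := by
  funext j; simp [shiftZ, add_assoc]

lemma shiftZ_zero {A : Type*} (x : ℤ → A) : shiftZ 0 x = x := by funext j; simp [shiftZ]

lemma shiftMap_eq_shiftZ {A : Type*} : shiftMap A = shiftZ 1 := rfl

lemma shiftMap_injective {A : Type*} : Function.Injective (shiftMap A) := by
  intro x y h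
  funext j
  have := congrFun h (j - 1)
  simpa [shiftMap] using this

lemma Subshift.shiftZ_mem (X : Subshift A) (c : ℤ) {x : ℤ → A} (hx : x ∈ X.carrier) :
    shiftZ c x ∈ X.carrier := by
  have hup : ∀ {y : ℤ → A}, y ∈ X.carrier → shiftZ 1 y ∈ X.carrier := by
    intro y hy; exact X.shift_mem' y hy
  have hdown : ∀ {y : ℤ → A}, y ∈ X.carrier → shiftZ (-1) y ∈ X.carrier := by
    intro y hy
    obtain ⟨z, hz, hzy⟩ := X.shift_surjOn' y hy
    have : shiftZ (-1) y = z := by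
      funext j
      have := congrFun hzy (j + -1)
      simp only [shiftMap] at this
      simpa [shiftZ] using this.symm
    rwa [this]
  induction c using Int.induction_on with
  | zero => rwa [shiftZ_zero]
  | succ i ih =>
    have := hup ih
    rw [shiftZ_shiftZ] at this
    have he : (1 : ℤ) + (i : ℤ) = (i : ℤ) + 1 := by ring
    rwa [he] at this
  | pred i ih =>
    have := hdown ih
    rw [shiftZ_shiftZ] at this
    have he : (-1 : ℤ) + -(i : ℤ) = -(i : ℤ) - 1 := by ring
    rwa [he] at this

/-- shift by `c` as a map on the subshift -/
def Subshift.sZ (X : Subshift A) (c : ℤ) (p : X.carrier) : X.carrier :=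
  ⟨shiftZ c p.1, X.shiftZ_mem c p.2⟩

lemma Subshift.sZ_coe (X : Subshift A) (c : ℤ) (p : X.carrier) (j : ℤ) :
    ((X.sZ c p) : ℤ → A) j = (p : ℤ → A) (j + c) := rfl

lemma Subshift.sZ_one (X : Subshift A) (p : X.carrier) : X.sZ 1 p = X.σ p := rfl

lemma Subshift.sZ_sZ (X : Subshift A) (a b : ℤ) (p : X.carrier) :
    X.sZ a (X.sZ b p) = X.sZ (a + b) p := by
  apply Subtype.ext; exact shiftZ_shiftZ a b p.1

lemma Subshift.sZ_injective (X : Subshift A) (c : ℤ) : Function.Injective (X.sZ c) := by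
  intro p q h
  apply Subtype.ext
  have h1 : shiftZ c p.1 = shiftZ c q.1 := congrArg Subtype.val h
  funext j
  have := congrFun h1 (j - c)
  simpa [shiftZ] using this

lemma Subshift.σ_surjective (X : Subshift A) : Function.Surjective X.σ := by
  intro p
  obtain ⟨y, hy, hyp⟩ := X.shift_surjOn' p.1 p.2
  exact ⟨⟨y, hy⟩, Subtype.ext hyp⟩

lemma Subshift.σ_continuous (X : Subshift A) : Continuous X.σ := by
  apply Continuous.subtype_mk
  exact (continuous_pi fun i => (continuous_apply (i + 1))).comp continuous_subtype_val

lemma Subshift.iter_σ_coe (X : Subshift A) (n : ℕ) (p : X.carrier) :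
    ((X.σ^[n] p) : ℤ → A) = shiftZ (n : ℤ) p.1 := by
  induction n with
  | zero => simp [shiftZ_zero]
  | succ k ih =>
    rw [Function.iterate_succ_apply']
    have : ((X.σ (X.σ^[k] p)) : ℤ → A) = shiftZ 1 ((X.σ^[k] p) : ℤ → A) := rfl
    rw [this, ih, shiftZ_shiftZ]
    have he : (1 : ℤ) + (k : ℤ) = ((k + 1 : ℕ) : ℤ) := by push_cast; ring
    rw [he]

instance subshiftCompact (X : Subshift A) : CompactSpace X.carrier := by
  haveI : CompactSpace (ℤ → A) := by infer_instance
  exact isCompact_iff_compactSpace.mp (X.isClosed'.isCompact)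

lemma Subshift.eval_continuous (X : Subshift A) (j : ℤ) :
    Continuous (fun p : X.carrier => (p : ℤ → A) j) :=
  (continuous_apply j).comp continuous_subtype_val

/-- cylinders are open -/
lemma Subshift.cylinder_isOpen (X : Subshift A) (u : ℤ → A) (r : ℕ) :
    IsOpen {p : X.carrier | ∀ j : ℤ, |j| ≤ (r : ℤ) → (p : ℤ → A) j = u j} := by
  have : {p : X.carrier | ∀ j : ℤ, |j| ≤ (r : ℤ) → (p : ℤ → A) j = u j}
      = ⋂ j ∈ Finset.Icc (-(r : ℤ)) (r : ℤ), {p : X.carrier | (p : ℤ → A) j = u j} := by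
    ext p
    simp only [Set.mem_setOf_eq, Set.mem_iInter, Finset.mem_Icc]
    constructor
    · intro h j hj; exact h j (abs_le.mpr hj)
    · intro h j hj; exact h j (abs_le.mp hj)
  rw [this]
  apply isOpen_biInter_finset
  intro j _
  exact (X.eval_continuous j).isOpen_preimage {u j} (isOpen_discrete _)

/-- every open set around a point contains a cylinder -/
lemma Subshift.exists_cylinder_subset (X : Subshift A) {O : Set X.carrier} (hO : IsOpen O)
    {p : X.carrier} (hp : p ∈ O) :
    ∃ r : ℕ, {q : X.carrier | ∀ j : ℤ, |j| ≤ (r : ℤ) → (q : ℤ → A) j = (p : ℤ → A) j} ⊆ O := by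
  obtain ⟨O', hO', hOO'⟩ := isOpen_induced_iff.mp hO
  have hpO' : (p : ℤ → A) ∈ O' := by rw [← hOO'] at hp; exact hp
  obtain ⟨I, u, hu, hsub⟩ := isOpen_pi_iff.mp hO' _ hpO'
  refine ⟨I.sup (fun i => i.natAbs), ?_⟩
  intro q hq
  have : (q : ℤ → A) ∈ O' := by
    apply hsub
    intro i hi
    have hiq : (q : ℤ → A) i = (p : ℤ → A) i := by
      apply hq
      have h1 : i.natAbs ≤ I.sup (fun i => i.natAbs) := Finset.le_sup hi
      have h2 : |i| = (i.natAbs : ℤ) := Int.abs_eq_natAbs i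
      rw [h2]
      exact_mod_cast h1
    rw [hiq]
    exact (hu i hi).2
  rw [← hOO']
  exact this

end Aux
section CHL
set_option linter.unusedSectionVars false
variable {A B : Type*} [TopologicalSpace A] [DiscreteTopology A] [Finite A]
  [TopologicalSpace B] [DiscreteTopology B] [Finite B]

lemma commutes_sZ (Y : Subshift A) (Z : Subshift B) (F : Y.carrier → Z.carrier)
    (hcomm : ∀ p, F (Y.σ p) = Z.σ (F p)) : ∀ (c : ℤ) (p : Y.carrier),
    F (Y.sZ c p) = Z.sZ c (F p) := by
  have hone : ∀ p, F (Y.sZ 1 p) = Z.sZ 1 (F p) := by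
    intro p; rw [Y.sZ_one, Z.sZ_one]; exact hcomm p
  intro c
  induction c using Int.induction_on with
  | zero =>
    intro p
    have h1 : Y.sZ 0 p = p := Subtype.ext (shiftZ_zero _)
    have h2 : Z.sZ 0 (F p) = F p := Subtype.ext (shiftZ_zero _)
    rw [h1, h2]
  | succ i ih =>
    intro p
    have e1 : Y.sZ ((i : ℤ) + 1) p = Y.sZ 1 (Y.sZ i p) := by
      rw [Y.sZ_sZ]; congr 1; ring
    have e2 : Z.sZ ((i : ℤ) + 1) (F p) = Z.sZ 1 (Z.sZ i (F p)) := by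
      rw [Z.sZ_sZ]; congr 1; ring
    rw [e1, e2, hone, ih]
  | pred i ih =>
    intro p
    apply Z.sZ_injective 1
    have e1 : Z.sZ 1 (Z.sZ (-(i:ℤ) - 1) (F p)) = Z.sZ (-(i:ℤ)) (F p) := by
      rw [Z.sZ_sZ]; congr 1; ring
    have e2 : Y.sZ 1 (Y.sZ (-(i:ℤ) - 1) p) = Y.sZ (-(i:ℤ)) p := by
      rw [Y.sZ_sZ]; congr 1; ring
    rw [e1, ← hone, e2, ih]

lemma chl (Y : Subshift A) (Z : Subshift B) (F : Y.carrier → Z.carrier)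
    (hF : Continuous F) (hcomm : ∀ p, F (Y.σ p) = Z.σ (F p)) :
    ∃ r : ℕ, ∀ (u v : Y.carrier) (i : ℤ),
      (∀ j : ℤ, |j - i| ≤ (r : ℤ) → (u : ℤ → A) j = (v : ℤ → A) j) →
      ((F u) : ℤ → B) i = ((F v) : ℤ → B) i := by
  have key : ∃ r : ℕ, ∀ u v : Y.carrier,
      (∀ j : ℤ, |j| ≤ (r : ℤ) → (u : ℤ → A) j = (v : ℤ → A) j) →
      ((F u) : ℤ → B) 0 = ((F v) : ℤ → B) 0 := by
    by_contra hcon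
    push_neg at hcon
    set D : ℕ → Set (Y.carrier × Y.carrier) := fun r =>
      {q | (∀ j : ℤ, |j| ≤ (r : ℤ) → (q.1 : ℤ → A) j = (q.2 : ℤ → A) j) ∧
        ((F q.1) : ℤ → B) 0 ≠ ((F q.2) : ℤ → B) 0} with hD
    have hclosed : ∀ r, IsClosed (D r) := by
      intro r
      have h1 : IsClosed {q : Y.carrier × Y.carrier |
          ∀ j : ℤ, |j| ≤ (r : ℤ) → (q.1 : ℤ → A) j = (q.2 : ℤ → A) j} := by
        have : {q : Y.carrier × Y.carrier |
            ∀ j : ℤ, |j| ≤ (r : ℤ) → (q.1 : ℤ → A) j = (q.2 : ℤ → A) j}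
            = ⋂ j ∈ Finset.Icc (-(r:ℤ)) (r:ℤ),
              {q : Y.carrier × Y.carrier | (q.1 : ℤ → A) j = (q.2 : ℤ → A) j} := by
          ext q
          simp only [Set.mem_setOf_eq, Set.mem_iInter, Finset.mem_Icc]
          exact ⟨fun h j hj => h j (abs_le.mpr hj), fun h j hj => h j (abs_le.mp hj)⟩
        rw [this]
        apply isClosed_biInter
        intro j _
        exact isClosed_eq ((Y.eval_continuous j).comp continuous_fst)
          ((Y.eval_continuous j).comp continuous_snd)
      have h2 : IsOpen {q : Y.carrier × Y.carrier |
          ((F q.1) : ℤ → B) 0 = ((F q.2) : ℤ → B) 0} := by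
        have hc1 : Continuous fun q : Y.carrier × Y.carrier => ((F q.1) : ℤ → B) 0 :=
          (Z.eval_continuous 0).comp (hF.comp continuous_fst)
        have hc2 : Continuous fun q : Y.carrier × Y.carrier => ((F q.2) : ℤ → B) 0 :=
          (Z.eval_continuous 0).comp (hF.comp continuous_snd)
        have : {q : Y.carrier × Y.carrier | ((F q.1) : ℤ → B) 0 = ((F q.2) : ℤ → B) 0}
            = (fun q : Y.carrier × Y.carrier => (((F q.1) : ℤ → B) 0, ((F q.2) : ℤ → B) 0))
              ⁻¹' {x : B × B | x.1 = x.2} := rfl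
        rw [this]
        exact (hc1.prodMk hc2).isOpen_preimage _ (isOpen_discrete _)
      exact h1.inter (isClosed_compl_iff.mpr h2)
    have hne : ∀ r, (D r).Nonempty := by
      intro r
      obtain ⟨u, v, hagree, hneq⟩ := hcon r
      exact ⟨(u, v), hagree, hneq⟩
    have hdec : ∀ r, D (r + 1) ⊆ D r := by
      intro r q hq
      exact ⟨fun j hj => hq.1 j (by push_cast; omega), hq.2⟩
    have hint : (⋂ r, D r).Nonempty :=
      IsCompact.nonempty_iInter_of_sequence_nonempty_isCompact_isClosed D hdec hne
        ((hclosed 0).isCompact) hclosed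
    obtain ⟨⟨u, v⟩, hq⟩ := hint
    simp only [Set.mem_iInter] at hq
    have huv : u = v := by
      apply Subtype.ext
      funext j
      exact (hq j.natAbs).1 j (by rw [Int.abs_eq_natAbs])
    exact (hq 0).2 (by rw [huv])
  obtain ⟨r, hr⟩ := key
  refine ⟨r, fun u v i hagree => ?_⟩
  have h1 : ((F (Y.sZ i u)) : ℤ → B) 0 = ((F (Y.sZ i v)) : ℤ → B) 0 := by
    apply hr
    intro j hj
    rw [Y.sZ_coe, Y.sZ_coe]
    apply hagree
    have : |j + i - i| = |j| := by congr 1; ring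
    omega
  rw [commutes_sZ Y Z F hcomm i u, commutes_sZ Y Z F hcomm i v] at h1
  rw [Z.sZ_coe, Z.sZ_coe] at h1
  simpa using h1

end CHL
section Join
set_option linter.unusedSectionVars false
variable {A : Type*} [TopologicalSpace A] [DiscreteTopology A] [Finite A]

lemma Subshift.join (X : Subshift A) (hirr : X.Irreducible)
    {u v : ℤ → A} (hu : u ∈ X.carrier) (hv : v ∈ X.carrier) (r N : ℕ) :
    ∃ n : ℕ, N ≤ n ∧ ∃ w ∈ X.carrier,
      (∀ j : ℤ, |j| ≤ (r : ℤ) → w j = u j) ∧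
      (∀ j : ℤ, |j| ≤ (r : ℤ) → w (j + (n : ℤ)) = v j) := by
  set U : Set X.carrier := {p | ∀ j : ℤ, |j| ≤ (r : ℤ) → (p : ℤ → A) j = u j} with hU
  set V : Set X.carrier := {p | ∀ j : ℤ, |j| ≤ (r : ℤ) → (p : ℤ → A) j = v j} with hV
  have hUo : IsOpen U := X.cylinder_isOpen u r
  have hVo : IsOpen V := X.cylinder_isOpen v r
  have hiter : Continuous (X.σ^[N]) := Continuous.iterate X.σ_continuous N
  have hV'o : IsOpen (X.σ^[N] ⁻¹' V) := hVo.preimage hiter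
  have hUne : U.Nonempty := ⟨⟨u, hu⟩, fun j _ => rfl⟩
  have hsurj : Function.Surjective (X.σ^[N]) := Function.Surjective.iterate X.σ_surjective N
  have hV'ne : (X.σ^[N] ⁻¹' V).Nonempty := by
    obtain ⟨q, hq⟩ : V.Nonempty := ⟨⟨v, hv⟩, fun j _ => rfl⟩
    obtain ⟨p, hp⟩ := hsurj q
    exact ⟨p, by rw [Set.mem_preimage, hp]; exact hq⟩
  obtain ⟨n, hn⟩ := hirr U (X.σ^[N] ⁻¹' V) hUo hV'o hUne hV'ne
  obtain ⟨q, ⟨p, hpU, hpq⟩, hqV⟩ := hn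
  have hq2 : X.σ^[N + n] p ∈ V := by
    rw [Function.iterate_add_apply, hpq]
    exact hqV
  refine ⟨N + n, le_add_of_nonneg_right (Nat.zero_le n) |>.trans_eq rfl, p.1, p.2, ?_, ?_⟩
  · intro j hj; exact hpU j hj
  · intro j hj
    have := hq2 j hj
    rwa [X.iter_σ_coe] at this

lemma Subshift.mem_of_locally_eq (X : Subshift A) {n : ℕ} {W : Set (Fin n → A)}
    (hX : X.carrier = {x | ∀ i : ℤ, (fun k : Fin n => x (i + (k.val : ℤ))) ∈ W})
    (z : ℤ → A)
    (h : ∀ i : ℤ, ∃ y ∈ X.carrier, ∀ j : ℤ, i ≤ j → j < i + (n : ℤ) → z j = y j) :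
    z ∈ X.carrier := by
  rw [hX]
  intro i
  obtain ⟨y, hy, hagree⟩ := h i
  have heq : (fun k : Fin n => z (i + (k.val : ℤ))) = (fun k : Fin n => y (i + (k.val : ℤ))) := by
    funext k
    have hk0 : (0 : ℤ) ≤ (k.val : ℤ) := Int.ofNat_nonneg _
    have hk1 : (k.val : ℤ) < (n : ℤ) := by exact_mod_cast k.isLt
    exact hagree _ (by omega) (by omega)
  rw [heq]
  rw [hX] at hy
  exact hy i

end Join
section Diamond
set_option linter.unusedSectionVars false
set_option maxHeartbeats 1000000
variable {Λ Γ : Type*} [TopologicalSpace Λ] [DiscreteTopology Λ] [Finite Λ]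
  [TopologicalSpace Γ] [DiscreteTopology Γ] [Finite Γ]

lemma no_diamond (Z : Subshift Λ) (X : Subshift Γ)
    (hsft : Z.IsSFT) (hirr : Z.Irreducible)
    (β : Z.carrier → X.carrier) (hβc : Continuous β) (hβcomm : ∀ p, β (Z.σ p) = X.σ (β p))
    (D : ℕ) (hfib : ∀ x, (β ⁻¹' {x}).Finite ∧ (β ⁻¹' {x}).ncard ≤ D)
    (s t : Z.carrier) (hst : β s = β t)
    (a b : ℤ) (htail : ∀ j : ℤ, (j < a ∨ b < j) → (s : ℤ → Λ) j = (t : ℤ → Λ) j) :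
    s = t := by
  classical
  obtain ⟨m, W, hW⟩ := hsft
  obtain ⟨r, hr⟩ := chl Z X β hβc hβcomm
  by_contra hne
  have hj₀ : ∃ j₀ : ℤ, a ≤ j₀ ∧ j₀ ≤ b ∧ (s : ℤ → Λ) j₀ ≠ (t : ℤ → Λ) j₀ := by
    have hex : ∃ j : ℤ, (s : ℤ → Λ) j ≠ (t : ℤ → Λ) j := by
      by_contra h
      push_neg at h
      exact hne (Subtype.ext (funext h))
    obtain ⟨j, hj⟩ := hex
    refine ⟨j, ?_, ?_, hj⟩ <;> by_contra h <;> exact hj (htail j (by omega))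
  obtain ⟨j₀, hj₀a, hj₀b, hj₀ne⟩ := hj₀
  obtain ⟨M, hM⟩ : ∃ M : ℤ, M = (m : ℤ) + 2 * (r : ℤ) + 1 := ⟨_, rfl⟩
  obtain ⟨A', hA'⟩ : ∃ x : ℤ, x = a - M := ⟨_, rfl⟩
  obtain ⟨B', hB'⟩ : ∃ x : ℤ, x = b + M := ⟨_, rfl⟩
  have hA1 : A' ≤ (A'.natAbs : ℤ) := Int.le_natAbs
  have hA2 : -A' ≤ (A'.natAbs : ℤ) := by rw [← Int.natAbs_neg]; exact Int.le_natAbs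
  have hB1 : B' ≤ (B'.natAbs : ℤ) := Int.le_natAbs
  have hB2 : -B' ≤ (B'.natAbs : ℤ) := by rw [← Int.natAbs_neg]; exact Int.le_natAbs
  -- Step 1: build a point with k disjoint copies of the configuration of s around [a,b]
  have copies : ∀ k : ℕ, ∃ (z : ℤ → Λ) (c : ℕ → ℤ) (ρ : ℕ), z ∈ Z.carrier ∧
      (A'.natAbs ≤ ρ ∧ B'.natAbs ≤ ρ) ∧
      (∀ i, i < k → ∀ j, A' ≤ j → j ≤ B' → -(ρ : ℤ) ≤ j + c i ∧ j + c i ≤ (ρ : ℤ)) ∧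
      (∀ i i', i < i' → i' < k → c i + B' < c i' + A') ∧
      (∀ i, i < k → ∀ j, A' ≤ j → j ≤ B' → z (j + c i) = (s : ℤ → Λ) j) := by
    intro k
    induction k with
    | zero =>
      exact ⟨s.1, fun _ => 0, A'.natAbs + B'.natAbs, s.2, ⟨by omega, by omega⟩,
        fun i hi => absurd hi (Nat.not_lt_zero i), fun i i' _ hi' => absurd hi' (Nat.not_lt_zero i'),
        fun i hi => absurd hi (Nat.not_lt_zero i)⟩
    | succ k ih =>
      obtain ⟨z, c, ρ, hz, ⟨hρA, hρB⟩, hcov, hsep, hcopy⟩ := ih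
      obtain ⟨n, hnN, w, hw, hwz, hws⟩ :=
        Z.join hirr hz s.2 ρ (ρ + A'.natAbs + B'.natAbs + 1)
      refine ⟨w, fun i => if i = k then (n : ℤ) else c i, ρ + n, hw, ⟨by omega, by omega⟩,
        ?_, ?_, ?_⟩
      · intro i hi j hjA hjB
        by_cases hik : i = k
        · simp only [hik, if_pos rfl]
          constructor <;> push_cast <;> omega
        · simp only [if_neg hik]
          have := hcov i (by omega) j hjA hjB
          constructor <;> push_cast <;> omega
      · intro i i' hii' hi'
        by_cases hik : i' = k
        · have hik2 : ¬ (i = k) := by omega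
          beta_reduce
          rw [if_pos hik, if_neg hik2]
          have h1 := hcov i (by omega) B' (by omega) le_rfl
          have h2 : ((ρ + A'.natAbs + B'.natAbs + 1 : ℕ) : ℤ) ≤ (n : ℤ) := by
            exact_mod_cast hnN
          push_cast at h2
          omega
        · have hik2 : ¬ (i = k) := by omega
          simp only [if_neg hik, if_neg hik2]
          exact hsep i i' hii' (by omega)
      · intro i hi j hjA hjB
        by_cases hik : i = k
        · simp only [hik, if_pos rfl]
          exact hws j (abs_le.mpr ⟨by omega, by omega⟩)
        · simp only [if_neg hik]
          have h1 := hcov i (by omega) j hjA hjB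
          rw [hwz (j + c i) (abs_le.mpr ⟨by omega, by omega⟩)]
          exact hcopy i (by omega) j hjA hjB
  obtain ⟨z, c, ρ, hz, _, _, hsep, hcopy⟩ := copies (D + 1)
  -- uniqueness of copy membership
  have hMpos : (0 : ℤ) < M := by omega
  have hdisj : ∀ i i', i < D + 1 → i' < D + 1 → i ≠ i' → ∀ j : ℤ,
      c i + A' ≤ j → j ≤ c i + B' → ¬ (c i' + a ≤ j ∧ j ≤ c i' + b) := by
    intro i i' hi hi' hne' j hj1 hj2 ⟨hj3, hj4⟩
    rcases Nat.lt_or_ge i i' with h | h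
    · have := hsep i i' h hi'
      omega
    · have hlt : i' < i := by omega
      have := hsep i' i hlt hi
      omega
  -- the switched points
  set inS : Finset ℕ → ℤ → Prop :=
    fun S j => ∃ i, i ∈ S ∧ i < D + 1 ∧ c i + a ≤ j ∧ j ≤ c i + b with hinS
  have hinS_dec : ∀ S j, Decidable (inS S j) := fun S j => Classical.dec _
  set y : Finset ℕ → ℤ → Λ := fun S j =>
    if h : inS S j then (t : ℤ → Λ) (j - c h.choose) else z j with hy
  -- F1
  have hF1 : ∀ (S : Finset ℕ) (i : ℕ), i ∈ S → i < D + 1 → ∀ j : ℤ,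
      c i + a ≤ j → j ≤ c i + b → y S j = (t : ℤ → Λ) (j - c i) := by
    intro S i hiS hiD j hj1 hj2
    have h : inS S j := ⟨i, hiS, hiD, hj1, hj2⟩
    simp only [hy, dif_pos h]
    obtain ⟨hc1, hc2, hc3, hc4⟩ := h.choose_spec
    congr 2
    by_contra hcc
    exact hdisj i h.choose hiD hc2 (fun he => hcc (by rw [he])) j (by omega) (by omega) ⟨hc3, hc4⟩
  -- F2
  have hF2 : ∀ (S : Finset ℕ) (j : ℤ),
      (∀ i, i ∈ S → i < D + 1 → ¬ (c i + a ≤ j ∧ j ≤ c i + b)) → y S j = z j := by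
    intro S j hj
    have h : ¬ inS S j := by
      rintro ⟨i, h1, h2, h3, h4⟩
      exact hj i h1 h2 ⟨h3, h4⟩
    simp only [hy, dif_neg h]
  -- shifted copies of s and t as points of Z
  set Spt : ℕ → Z.carrier := fun i => ⟨shiftZ (-(c i)) s.1, Z.shiftZ_mem _ s.2⟩ with hSpt
  set Tpt : ℕ → Z.carrier := fun i => ⟨shiftZ (-(c i)) t.1, Z.shiftZ_mem _ t.2⟩ with hTpt
  have hSptv : ∀ i j, (Spt i : ℤ → Λ) j = (s : ℤ → Λ) (j - c i) := by
    intro i j; simp [hSpt, shiftZ, sub_eq_add_neg]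
  have hTptv : ∀ i j, (Tpt i : ℤ → Λ) j = (t : ℤ → Λ) (j - c i) := by
    intro i j; simp [hTpt, shiftZ, sub_eq_add_neg]
  -- copy content of z
  have hzcopy : ∀ i, i < D + 1 → ∀ j : ℤ, c i + A' ≤ j → j ≤ c i + B' →
      z j = (s : ℤ → Λ) (j - c i) := by
    intro i hi j hj1 hj2
    have := hcopy i hi (j - c i) (by omega) (by omega)
    rw [sub_add_cancel] at this
    exact this
  -- F4 : on the whole copy region, y S agrees with the shifted t
  have hF4 : ∀ (S : Finset ℕ) (i : ℕ), i ∈ S → i < D + 1 → ∀ j : ℤ,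
      c i + A' ≤ j → j ≤ c i + B' → y S j = (t : ℤ → Λ) (j - c i) := by
    intro S i hiS hiD j hj1 hj2
    by_cases hin : c i + a ≤ j ∧ j ≤ c i + b
    · exact hF1 S i hiS hiD j hin.1 hin.2
    · have hz1 : y S j = z j := by
        apply hF2
        intro i' hi'S hi'D hcontra
        by_cases hii' : i' = i
        · rw [hii'] at hcontra; exact hin hcontra
        · exact hdisj i i' hiD hi'D (fun he => hii' he.symm) j hj1 hj2 hcontra
      rw [hz1, hzcopy i hiD j hj1 hj2]
      exact htail (j - c i) (by omega)
  -- F5 : membership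
  have hymem : ∀ S : Finset ℕ, y S ∈ Z.carrier := by
    intro S
    apply Z.mem_of_locally_eq hW
    intro i₀
    by_cases hcase : ∃ i, i ∈ S ∧ i < D + 1 ∧ c i + a ≤ i₀ + (m : ℤ) - 1 ∧ i₀ ≤ c i + b
    · obtain ⟨i, hiS, hiD, hint1, hint2⟩ := hcase
      refine ⟨(Tpt i).1, (Tpt i).2, ?_⟩
      intro j hj1 hj2
      rw [hTptv]
      apply hF4 S i hiS hiD j (by omega) (by omega)
    · push_neg at hcase
      refine ⟨z, hz, ?_⟩
      intro j hj1 hj2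
      apply hF2
      intro i hiS hiD hcontra
      have := hcase i hiS hiD
      omega
  set Ypt : Finset ℕ → Z.carrier := fun S => ⟨y S, hymem S⟩ with hYpt
  set Zpt : Z.carrier := ⟨z, hz⟩ with hZpt
  -- F6 : all switched points have the same image
  have himg : ∀ S : Finset ℕ, β (Ypt S) = β Zpt := by
    intro S
    apply Subtype.ext
    funext j
    by_cases hcase : ∃ i, i ∈ S ∧ i < D + 1 ∧ c i + a ≤ j + (r : ℤ) ∧ j - (r : ℤ) ≤ c i + b
    · obtain ⟨i, hiS, hiD, hint1, hint2⟩ := hcase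
      have h1 : (β (Ypt S) : ℤ → Γ) j = (β (Tpt i) : ℤ → Γ) j := by
        apply hr
        intro j' hj'
        rw [hTptv]
        have habs := abs_le.mp hj'
        exact hF4 S i hiS hiD j' (by omega) (by omega)
      have h2 : (β Zpt : ℤ → Γ) j = (β (Spt i) : ℤ → Γ) j := by
        apply hr
        intro j' hj'
        rw [hSptv]
        have habs := abs_le.mp hj'
        exact hzcopy i hiD j' (by omega) (by omega)
      have h3 : β (Tpt i) = β (Spt i) := by
        have e1 : Tpt i = Z.sZ (-(c i)) t := rfl
        have e2 : Spt i = Z.sZ (-(c i)) s := rfl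
        rw [e1, e2, commutes_sZ Z X β hβcomm, commutes_sZ Z X β hβcomm, hst]
      rw [h1, h3, ← h2]
    · push_neg at hcase
      apply hr
      intro j' hj'
      apply hF2
      intro i hiS hiD hcontra
      have := hcase i hiS hiD
      have habs := abs_le.mp hj'
      omega
  -- F7 : injectivity on the powerset
  have hinj : ∀ S S' : Finset ℕ, S ⊆ Finset.range (D + 1) → S' ⊆ Finset.range (D + 1) →
      Ypt S = Ypt S' → S = S' := by
    intro S S' hS hS' hYY
    have hyy : ∀ j, y S j = y S' j := fun j => congrFun (congrArg Subtype.val hYY) j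
    by_contra hSS
    have hkey : ∀ (T T' : Finset ℕ), T ⊆ Finset.range (D + 1) → T' ⊆ Finset.range (D + 1) →
        (∀ j, y T j = y T' j) → ∀ i, i ∈ T → i ∈ T' := by
      intro T T' hT hT' hyy' i hiT
      by_contra hiT'
      have hiD : i < D + 1 := Finset.mem_range.mp (hT hiT)
      have h1 : y T (c i + j₀) = (t : ℤ → Λ) j₀ := by
        have := hF1 T i hiT hiD (c i + j₀) (by omega) (by omega)
        rw [this]
        congr 1
        ring
      have h2 : y T' (c i + j₀) = (s : ℤ → Λ) j₀ := by
        have hz1 : y T' (c i + j₀) = z (c i + j₀) := by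
          apply hF2
          intro i' hi' hi'D hcontra
          by_cases hii' : i' = i
          · rw [hii'] at hi'; exact hiT' hi'
          · exact hdisj i i' hiD hi'D (fun he => hii' he.symm) (c i + j₀)
              (by omega) (by omega) hcontra
        rw [hz1]
        have := hzcopy i hiD (c i + j₀) (by omega) (by omega)
        rw [this]
        congr 1
        ring
      apply hj₀ne
      rw [← h2, ← hyy' (c i + j₀)]
      exact h1
    apply hSS
    apply Finset.ext
    intro i
    exact ⟨fun h => hkey S S' hS hS' hyy i h,
      fun h => hkey S' S hS' hS (fun j => (hyy j).symm) i h⟩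
  -- counting
  have hfibZ := hfib (β Zpt)
  have hsubset : ∀ S ∈ (Finset.range (D + 1)).powerset, Ypt S ∈ hfibZ.1.toFinset := by
    intro S _
    rw [Set.Finite.mem_toFinset]
    exact himg S
  have hcard : ((Finset.range (D + 1)).powerset).card ≤ hfibZ.1.toFinset.card := by
    apply Finset.card_le_card_of_injOn Ypt hsubset
    intro S hS S' hS' h
    exact hinj S S' (Finset.mem_powerset.mp hS) (Finset.mem_powerset.mp hS') h
  rw [Finset.card_powerset, Finset.card_range] at hcard
  have hcard2 : (β ⁻¹' {β Zpt}).ncard = hfibZ.1.toFinset.card :=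
    Set.ncard_eq_toFinset_card _ hfibZ.1
  have hD : (β ⁻¹' {β Zpt}).ncard ≤ D := hfibZ.2
  have h2D : D < 2 ^ (D + 1) := by
    calc D < 2 ^ D := Nat.lt_two_pow_self
      _ ≤ 2 ^ (D + 1) := Nat.pow_le_pow_right (by norm_num) (by omega)
  omega

end Diamond
section Uniq
set_option linter.unusedSectionVars false
set_option maxHeartbeats 1000000
variable {Λ Γ Ξ : Type*} [TopologicalSpace Λ] [DiscreteTopology Λ] [Finite Λ]
  [TopologicalSpace Γ] [DiscreteTopology Γ] [Finite Γ]
  [TopologicalSpace Ξ] [DiscreteTopology Ξ] [Finite Ξ]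

lemma uniq_lift (Y : Subshift Λ) (Z : Subshift Γ) (X : Subshift Ξ)
    (hYsft : Y.IsSFT) (hYirr : Y.Irreducible)
    (hZsft : Z.IsSFT) (hZirr : Z.Irreducible)
    (β : Z.carrier → X.carrier) (hβc : Continuous β) (hβcomm : ∀ p, β (Z.σ p) = X.σ (β p))
    (D : ℕ) (hfib : ∀ x, (β ⁻¹' {x}).Finite ∧ (β ⁻¹' {x}).ncard ≤ D)
    (g h : Y.carrier → Z.carrier) (hgc : Continuous g) (hhc : Continuous h)
    (hgcomm : ∀ p, g (Y.σ p) = Z.σ (g p)) (hhcomm : ∀ p, h (Y.σ p) = Z.σ (h p))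
    (hβg : ∀ p, β (g p) = β (h p)) (y₀ : Y.carrier) (h₀ : g y₀ = h y₀) :
    ∀ p, g p = h p := by
  classical
  obtain ⟨m, W, hW⟩ := hYsft
  obtain ⟨rg, hrg⟩ := chl Y Z g hgc hgcomm
  obtain ⟨rh, hrh⟩ := chl Y Z h hhc hhcomm
  obtain ⟨r, hrgr, hrhr⟩ : ∃ r : ℕ, rg ≤ r ∧ rh ≤ r := ⟨max rg rh, le_max_left _ _, le_max_right _ _⟩
  set S : Set Y.carrier := {p | g p = h p} with hS
  have hSclosed : IsClosed S := isClosed_eq hgc hhc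
  -- density of S
  have hdense : ∀ (p : Y.carrier) (ρ : ℕ), ∃ q : Y.carrier, q ∈ S ∧
      ∀ j : ℤ, |j| ≤ (ρ : ℤ) → (q : ℤ → Λ) j = (p : ℤ → Λ) j := by
    intro p ρ
    obtain ⟨K, hK⟩ : ∃ K : ℕ, K = ρ + m := ⟨_, rfl⟩
    obtain ⟨n₁, hn₁, w₁, hw₁, hw₁a, hw₁b⟩ := Y.join hYirr y₀.2 p.2 K (2 * K + 1)
    obtain ⟨n₂, hn₂, w₂, hw₂, hw₂a, hw₂b⟩ := Y.join hYirr hw₁ y₀.2 (n₁ + K) (2 * (n₁ + K) + 1)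
    set htil : ℤ → Λ := fun j =>
      if j < -(K : ℤ) then (y₀ : ℤ → Λ) j
      else if j ≤ (n₂ : ℤ) + K then w₂ j
      else (y₀ : ℤ → Λ) (j - n₂) with hhtil
    have f2 : ∀ j : ℤ, -(K : ℤ) ≤ j → j ≤ (n₂ : ℤ) + K → htil j = w₂ j := by
      intro j h1 h2
      simp only [hhtil]
      rw [if_neg (by omega), if_pos (by omega)]
    have f1 : ∀ j : ℤ, j ≤ (K : ℤ) → htil j = (y₀ : ℤ → Λ) j := by
      intro j h1
      by_cases hj : j < -(K : ℤ)
      · simp only [hhtil]; rw [if_pos hj]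
      · push_neg at hj
        rw [f2 j hj (by omega)]
        have e1 : w₂ j = w₁ j := hw₂a j (by
          rw [abs_le]; constructor <;> push_cast <;> omega)
        have e2 : w₁ j = (y₀ : ℤ → Λ) j := hw₁a j (by rw [abs_le]; constructor <;> omega)
        rw [e1, e2]
    have f3 : ∀ j : ℤ, (n₂ : ℤ) - n₁ - K ≤ j → htil j = (y₀ : ℤ → Λ) (j - n₂) := by
      intro j h1
      by_cases hj : j ≤ (n₂ : ℤ) + K
      · rw [f2 j (by push_cast at hn₁ hn₂ ⊢; omega) hj]
        have := hw₂b (j - n₂) (by rw [abs_le]; constructor <;> push_cast at hn₁ hn₂ ⊢ <;> omega)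
        rw [sub_add_cancel] at this
        exact this
      · push_neg at hj
        simp only [hhtil]
        rw [if_neg (by omega), if_neg (by omega)]
    have hmem : htil ∈ Y.carrier := by
      apply Y.mem_of_locally_eq hW
      intro i₀
      by_cases hc1 : i₀ + (m : ℤ) - 1 ≤ (K : ℤ)
      · exact ⟨(y₀ : ℤ → Λ), y₀.2, fun j hj1 hj2 => f1 j (by omega)⟩
      · by_cases hc2 : i₀ + (m : ℤ) - 1 ≤ (n₂ : ℤ) + K
        · refine ⟨w₂, hw₂, fun j hj1 hj2 => f2 j (by push_cast at hc1 ⊢; omega) (by omega)⟩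
        · refine ⟨shiftZ (-(n₂ : ℤ)) (y₀ : ℤ → Λ), Y.shiftZ_mem _ y₀.2, fun j hj1 hj2 => ?_⟩
          have : htil j = (y₀ : ℤ → Λ) (j - n₂) := by
            apply f3
            push_cast at hc2 hn₁ hn₂ ⊢
            omega
          rw [this]
          simp [shiftZ, sub_eq_add_neg]
    set Hstar : Y.carrier := ⟨shiftZ (n₁ : ℤ) htil, Y.shiftZ_mem _ hmem⟩ with hHstar
    have hq1 : ∀ j : ℤ, |j| ≤ (ρ : ℤ) → (Hstar : ℤ → Λ) j = (p : ℤ → Λ) j := by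
      intro j hj
      have habs := abs_le.mp hj
      have e0 : (Hstar : ℤ → Λ) j = htil (j + n₁) := rfl
      rw [e0, f2 (j + n₁) (by push_cast at hn₁ ⊢; omega) (by push_cast at hn₁ hn₂ ⊢; omega)]
      have e1 : w₂ (j + n₁) = w₁ (j + n₁) :=
        hw₂a (j + n₁) (by rw [abs_le]; constructor <;> push_cast at hn₁ ⊢ <;> omega)
      rw [e1]
      exact hw₁b j (by rw [abs_le]; constructor <;> push_cast <;> omega)
    -- left tail
    have hq2 : ∀ j : ℤ, j ≤ (K : ℤ) - n₁ → (Hstar : ℤ → Λ) j = ((Y.sZ (n₁ : ℤ) y₀) : ℤ → Λ) j := by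
      intro j hj
      have e0 : (Hstar : ℤ → Λ) j = htil (j + n₁) := rfl
      rw [e0, f1 (j + n₁) (by omega)]
      rfl
    -- right tail
    have hq3 : ∀ j : ℤ, (n₂ : ℤ) - 2 * n₁ - K ≤ j →
        (Hstar : ℤ → Λ) j = ((Y.sZ ((n₁ : ℤ) - n₂) y₀) : ℤ → Λ) j := by
      intro j hj
      have e0 : (Hstar : ℤ → Λ) j = htil (j + n₁) := rfl
      rw [e0, f3 (j + n₁) (by omega)]
      rw [Y.sZ_coe]
      congr 1
      ring
    -- the two images agree on tails
    have hgQ : g (Y.sZ (n₁ : ℤ) y₀) = h (Y.sZ (n₁ : ℤ) y₀) := by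
      rw [commutes_sZ Y Z g hgcomm, commutes_sZ Y Z h hhcomm, h₀]
    have hgQ' : g (Y.sZ ((n₁ : ℤ) - n₂) y₀) = h (Y.sZ ((n₁ : ℤ) - n₂) y₀) := by
      rw [commutes_sZ Y Z g hgcomm, commutes_sZ Y Z h hhcomm, h₀]
    have htails : ∀ i : ℤ, (i < (K : ℤ) - n₁ - r ∨ (n₂ : ℤ) - 2 * n₁ - K + r < i) →
        ((g Hstar) : ℤ → Γ) i = ((h Hstar) : ℤ → Γ) i := by
      intro i hi
      rcases hi with hi | hi
      · have e1 : ((g Hstar) : ℤ → Γ) i = ((g (Y.sZ (n₁ : ℤ) y₀)) : ℤ → Γ) i := by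
          apply hrg
          intro j hj
          have habs := abs_le.mp hj
          exact hq2 j (by omega)
        have e2 : ((h Hstar) : ℤ → Γ) i = ((h (Y.sZ (n₁ : ℤ) y₀)) : ℤ → Γ) i := by
          apply hrh
          intro j hj
          have habs := abs_le.mp hj
          exact hq2 j (by omega)
        rw [e1, e2, hgQ]
      · have e1 : ((g Hstar) : ℤ → Γ) i = ((g (Y.sZ ((n₁ : ℤ) - n₂) y₀)) : ℤ → Γ) i := by
          apply hrg
          intro j hj
          have habs := abs_le.mp hj
          exact hq3 j (by omega)
        have e2 : ((h Hstar) : ℤ → Γ) i = ((h (Y.sZ ((n₁ : ℤ) - n₂) y₀)) : ℤ → Γ) i := by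
          apply hrh
          intro j hj
          have habs := abs_le.mp hj
          exact hq3 j (by omega)
        rw [e1, e2, hgQ']
    have hdiam : g Hstar = h Hstar := by
      apply no_diamond Z X hZsft hZirr β hβc hβcomm D hfib _ _ (hβg Hstar)
        ((K : ℤ) - n₁ - r) ((n₂ : ℤ) - 2 * n₁ - K + r)
      exact htails
    exact ⟨Hstar, hdiam, hq1⟩
  -- closedness + density
  intro p
  have hp : p ∈ closure S := by
    rw [mem_closure_iff]
    intro O hO hpO
    obtain ⟨ρ, hρ⟩ := Y.exists_cylinder_subset hO hpO
    obtain ⟨q, hqS, hqa⟩ := hdense p ρ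
    exact ⟨q, hρ (fun j hj => hqa j hj), hqS⟩
  rwa [hSclosed.closure_eq] at hp

end Uniq
set_option maxHeartbeats 1600000 in
/-- Two unramified intermediate factors of a Galois factor `ϖ : Y → X` are topologically
conjugate as intermediate factors if and only if their associated subgroups
`Aut(Y/Z₁, α₁)` and `Aut(Y/Z₂, α₂)` of the Galois group coincide. -/
theorem stmt_8 {A B C D : Type*} [TopologicalSpace A] [DiscreteTopology A] [Finite A]
    [TopologicalSpace B] [DiscreteTopology B] [Finite B]
    [TopologicalSpace C] [DiscreteTopology C] [Finite C]
    [TopologicalSpace D] [DiscreteTopology D] [Finite D]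
    (X : Subshift A) (Y : Subshift B) (Z₁ : Subshift C) (Z₂ : Subshift D)
    (hXsft : X.IsSFT) (hXirr : X.Irreducible) (hYsft : Y.IsSFT) (hYirr : Y.Irreducible)
    (hZ₁sft : Z₁.IsSFT) (hZ₁irr : Z₁.Irreducible) (hZ₂sft : Z₂.IsSFT) (hZ₂irr : Z₂.Irreducible)
    (ϖ : Y.carrier → X.carrier) (d : ℕ)
    (hϖ : IsUnramified Y X ϖ d) (hGal : Nat.card (relAut Y X ϖ) = d)
    (α₁ : Y.carrier → Z₁.carrier) (β₁ : Z₁.carrier → X.carrier) (d₁ : ℕ)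
    (hα₁ : IsUnramified Y Z₁ α₁ d₁) (hβ₁ : IsFactorMap Z₁ X β₁)
    (hcomp₁ : ∀ y, β₁ (α₁ y) = ϖ y)
    (α₂ : Y.carrier → Z₂.carrier) (β₂ : Z₂.carrier → X.carrier) (d₂ : ℕ)
    (hα₂ : IsUnramified Y Z₂ α₂ d₂) (hβ₂ : IsFactorMap Z₂ X β₂)
    (hcomp₂ : ∀ y, β₂ (α₂ y) = ϖ y) :
    (∃ f : Z₁.carrier ≃ Z₂.carrier, Continuous f ∧ Continuous f.symm ∧
        (∀ z, f (Z₁.σ z) = Z₂.σ (f z)) ∧ (∀ y, f (α₁ y) = α₂ y) ∧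
        ∀ z, β₂ (f z) = β₁ z) ↔
      relAut Y Z₁ α₁ = relAut Y Z₂ α₂ := by
  classical
  have hmem₁ : ∀ φ : Equiv.Perm Y.carrier, φ ∈ relAut Y Z₁ α₁ ↔
      (Continuous φ ∧ Continuous (φ⁻¹ : Equiv.Perm Y.carrier) ∧
        (∀ y, φ (Y.σ y) = Y.σ (φ y)) ∧ ∀ y, α₁ (φ y) = α₁ y) := fun _ => Iff.rfl
  have hmem₂ : ∀ φ : Equiv.Perm Y.carrier, φ ∈ relAut Y Z₂ α₂ ↔
      (Continuous φ ∧ Continuous (φ⁻¹ : Equiv.Perm Y.carrier) ∧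
        (∀ y, φ (Y.σ y) = Y.σ (φ y)) ∧ ∀ y, α₂ (φ y) = α₂ y) := fun _ => Iff.rfl
  rcases isEmpty_or_nonempty Y.carrier with hY | hY
  · -- degenerate case : everything is empty
    haveI hZ₁e : IsEmpty Z₁.carrier := ⟨fun z => by
      obtain ⟨y, -⟩ := hα₁.1.surjective z; exact IsEmpty.false y⟩
    haveI hZ₂e : IsEmpty Z₂.carrier := ⟨fun z => by
      obtain ⟨y, -⟩ := hα₂.1.surjective z; exact IsEmpty.false y⟩
    have hc12 : ∀ f : Z₁.carrier → Z₂.carrier, Continuous f := fun f =>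
      continuous_iff_continuousAt.mpr fun x => (IsEmpty.false x).elim
    have hc21 : ∀ f : Z₂.carrier → Z₁.carrier, Continuous f := fun f =>
      continuous_iff_continuousAt.mpr fun x => (IsEmpty.false x).elim
    have hcYY : ∀ f : Y.carrier → Y.carrier, Continuous f := fun f =>
      continuous_iff_continuousAt.mpr fun x => (IsEmpty.false x).elim
    apply iff_of_true
    · exact ⟨Equiv.equivOfIsEmpty _ _, hc12 _, hc21 _, fun z => (IsEmpty.false z).elim,
        fun y => (IsEmpty.false y).elim, fun z => (IsEmpty.false z).elim⟩
    · ext φ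
      rw [hmem₁, hmem₂]
      exact iff_of_true
        ⟨hcYY _, hcYY _, fun y => (IsEmpty.false y).elim, fun y => (IsEmpty.false y).elim⟩
        ⟨hcYY _, hcYY _, fun y => (IsEmpty.false y).elim, fun y => (IsEmpty.false y).elim⟩
  · constructor
    · -- easy direction
      rintro ⟨f, hfc, hfsc, hfσ, hfα, hfβ⟩
      ext φ
      rw [hmem₁, hmem₂]
      constructor
      · rintro ⟨hc, hci, hcomm, hrel⟩
        refine ⟨hc, hci, hcomm, fun y => ?_⟩
        rw [← hfα (φ y), hrel y, hfα y]
      · rintro ⟨hc, hci, hcomm, hrel⟩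
        refine ⟨hc, hci, hcomm, fun y => ?_⟩
        apply f.injective
        rw [hfα (φ y), hfα y]
        exact hrel y
    · -- main direction
      intro hH
      obtain ⟨y₀⟩ := hY
      have hd0 : 0 < d := by
        have hne : (ϖ ⁻¹' {ϖ y₀}).Nonempty := ⟨y₀, rfl⟩
        have := (Set.ncard_pos (hϖ.2 (ϖ y₀)).1).mpr hne
        rw [(hϖ.2 (ϖ y₀)).2] at this
        exact this
      -- freeness of the Galois group
      have hfibϖ : ∀ x, (ϖ ⁻¹' {x}).Finite ∧ (ϖ ⁻¹' {x}).ncard ≤ d :=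
        fun x => ⟨(hϖ.2 x).1, le_of_eq (hϖ.2 x).2⟩
      have hfree : ∀ φ : Equiv.Perm Y.carrier, φ ∈ relAut Y X ϖ →
          ∀ y : Y.carrier, φ y = y → φ = 1 := by
        intro φ hφ y hy
        obtain ⟨hc, hci, hcomm, hrel⟩ := hφ
        have := uniq_lift Y Y X hYsft hYirr hYsft hYirr ϖ hϖ.1.continuous hϖ.1.commutes
          d hfibϖ (⇑φ) id hc continuous_id hcomm (fun p => rfl) (fun p => hrel p) y hy
        exact Equiv.ext fun p => this p
      -- transitivity of the Galois group on fibers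
      haveI hGfin : Finite (relAut Y X ϖ) := Nat.finite_of_card_ne_zero (by omega)
      have htrans : ∀ y y' : Y.carrier, ϖ y = ϖ y' →
          ∃ φ ∈ relAut Y X ϖ, φ y = y' := by
        intro y y' hyy'
        set e : (relAut Y X ϖ) → Y.carrier := fun φ => (φ : Equiv.Perm Y.carrier) y with he
        have hinj : Function.Injective e := by
          intro φ ψ hφψ
          have h1 : ((ψ⁻¹ * φ : relAut Y X ϖ) : Equiv.Perm Y.carrier) y = y := by
            show (ψ : Equiv.Perm Y.carrier)⁻¹ ((φ : Equiv.Perm Y.carrier) y) = y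
            rw [show ((φ : Equiv.Perm Y.carrier) y) = ((ψ : Equiv.Perm Y.carrier) y) from hφψ]
            exact Equiv.symm_apply_apply _ _
          have h2 := hfree _ (ψ⁻¹ * φ).2 y h1
          have h3 : (ψ⁻¹ * φ : relAut Y X ϖ) = 1 := Subtype.ext h2
          have h4 := mul_eq_one_iff_inv_eq.mp h3
          rw [inv_inv] at h4
          exact h4.symm
        have hrange : Set.range e ⊆ ϖ ⁻¹' {ϖ y} := by
          rintro - ⟨φ, rfl⟩
          obtain ⟨-, -, -, hrel⟩ := φ.2
          exact hrel y
        have hcard : (ϖ ⁻¹' {ϖ y}).ncard ≤ (Set.range e).ncard := by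
          have h1 : (Set.range e).ncard = d := by
            rw [← Nat.card_coe_set_eq, Nat.card_range_of_injective hinj, hGal]
          rw [h1, (hϖ.2 (ϖ y)).2]
        have heq := Set.eq_of_subset_of_ncard_le hrange hcard (hϖ.2 (ϖ y)).1
        have hy' : y' ∈ Set.range e := by
          rw [heq]
          exact hyy'.symm
        obtain ⟨φ, hφ⟩ := hy'
        exact ⟨(φ : Equiv.Perm Y.carrier), φ.2, hφ⟩
      -- fibers of β₁ and β₂ are small
      have hfib1 : ∀ x, (β₁ ⁻¹' {x}).Finite ∧ (β₁ ⁻¹' {x}).ncard ≤ d := by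
        intro x
        have hsub : β₁ ⁻¹' {x} ⊆ α₁ '' (ϖ ⁻¹' {x}) := by
          intro z hz
          obtain ⟨y, hy⟩ := hα₁.1.surjective z
          refine ⟨y, ?_, hy⟩
          have hzx : β₁ z = x := hz
          rw [Set.mem_preimage, Set.mem_singleton_iff, ← hcomp₁ y, hy, hzx]
        have hfin : (α₁ '' (ϖ ⁻¹' {x})).Finite := ((hϖ.2 x).1).image α₁
        refine ⟨hfin.subset hsub, ?_⟩
        calc (β₁ ⁻¹' {x}).ncard ≤ (α₁ '' (ϖ ⁻¹' {x})).ncard := Set.ncard_le_ncard hsub hfin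
          _ ≤ (ϖ ⁻¹' {x}).ncard := Set.ncard_image_le (hϖ.2 x).1
          _ = d := (hϖ.2 x).2
      have hfib2 : ∀ x, (β₂ ⁻¹' {x}).Finite ∧ (β₂ ⁻¹' {x}).ncard ≤ d := by
        intro x
        have hsub : β₂ ⁻¹' {x} ⊆ α₂ '' (ϖ ⁻¹' {x}) := by
          intro z hz
          obtain ⟨y, hy⟩ := hα₂.1.surjective z
          refine ⟨y, ?_, hy⟩
          have hzx : β₂ z = x := hz
          rw [Set.mem_preimage, Set.mem_singleton_iff, ← hcomp₂ y, hy, hzx]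
        have hfin : (α₂ '' (ϖ ⁻¹' {x})).Finite := ((hϖ.2 x).1).image α₂
        refine ⟨hfin.subset hsub, ?_⟩
        calc (β₂ ⁻¹' {x}).ncard ≤ (α₂ '' (ϖ ⁻¹' {x})).ncard := Set.ncard_le_ncard hsub hfin
          _ ≤ (ϖ ⁻¹' {x}).ncard := Set.ncard_image_le (hϖ.2 x).1
          _ = d := (hϖ.2 x).2
      -- the kernels of α₁ and α₂ coincide
      have hker₁ : ∀ y y' : Y.carrier, α₁ y = α₁ y' → ∃ φ ∈ relAut Y Z₁ α₁, φ y = y' := by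
        intro y y' hαyy'
        have hϖeq : ϖ y = ϖ y' := by rw [← hcomp₁ y, ← hcomp₁ y', hαyy']
        obtain ⟨φ, hφ, hφy⟩ := htrans y y' hϖeq
        obtain ⟨hc, hci, hcomm, hrel⟩ := hφ
        have hαφ : ∀ p, (α₁ ∘ ⇑φ) p = α₁ p := by
          apply uniq_lift Y Z₁ X hYsft hYirr hZ₁sft hZ₁irr β₁ hβ₁.continuous hβ₁.commutes
            d hfib1 (α₁ ∘ ⇑φ) α₁ (hα₁.1.continuous.comp hc) hα₁.1.continuous
            (fun p => by simp only [Function.comp_apply]; rw [hcomm p, hα₁.1.commutes])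
            (fun p => hα₁.1.commutes p)
            (fun p => by simp only [Function.comp_apply]; rw [hcomp₁ (φ p), hrel p, ← hcomp₁ p])
            y
          simp only [Function.comp_apply]
          rw [hφy, hαyy']
        exact ⟨φ, ⟨hc, hci, hcomm, fun p => hαφ p⟩, hφy⟩
      have hker₂ : ∀ y y' : Y.carrier, α₂ y = α₂ y' → ∃ φ ∈ relAut Y Z₂ α₂, φ y = y' := by
        intro y y' hαyy'
        have hϖeq : ϖ y = ϖ y' := by rw [← hcomp₂ y, ← hcomp₂ y', hαyy']
        obtain ⟨φ, hφ, hφy⟩ := htrans y y' hϖeq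
        obtain ⟨hc, hci, hcomm, hrel⟩ := hφ
        have hαφ : ∀ p, (α₂ ∘ ⇑φ) p = α₂ p := by
          apply uniq_lift Y Z₂ X hYsft hYirr hZ₂sft hZ₂irr β₂ hβ₂.continuous hβ₂.commutes
            d hfib2 (α₂ ∘ ⇑φ) α₂ (hα₂.1.continuous.comp hc) hα₂.1.continuous
            (fun p => by simp only [Function.comp_apply]; rw [hcomm p, hα₂.1.commutes])
            (fun p => hα₂.1.commutes p)
            (fun p => by simp only [Function.comp_apply]; rw [hcomp₂ (φ p), hrel p, ← hcomp₂ p])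
            y
          simp only [Function.comp_apply]
          rw [hφy, hαyy']
        exact ⟨φ, ⟨hc, hci, hcomm, fun p => hαφ p⟩, hφy⟩
      have hclaim₁₂ : ∀ y y' : Y.carrier, α₁ y = α₁ y' → α₂ y = α₂ y' := by
        intro y y' hyy'
        obtain ⟨φ, hφ, hφy⟩ := hker₁ y y' hyy'
        rw [hH] at hφ
        obtain ⟨-, -, -, hrel⟩ := hφ
        rw [← hφy, hrel y]
      have hclaim₂₁ : ∀ y y' : Y.carrier, α₂ y = α₂ y' → α₁ y = α₁ y' := by
        intro y y' hyy'
        obtain ⟨φ, hφ, hφy⟩ := hker₂ y y' hyy'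
        rw [← hH] at hφ
        obtain ⟨-, -, -, hrel⟩ := hφ
        rw [← hφy, hrel y]
      -- construct the conjugacy
      set s₁ : Z₁.carrier → Y.carrier := Function.surjInv hα₁.1.surjective with hs₁
      set s₂ : Z₂.carrier → Y.carrier := Function.surjInv hα₂.1.surjective with hs₂
      have hs₁e : ∀ z, α₁ (s₁ z) = z := Function.surjInv_eq hα₁.1.surjective
      have hs₂e : ∀ z, α₂ (s₂ z) = z := Function.surjInv_eq hα₂.1.surjective
      set ff : Z₁.carrier → Z₂.carrier := fun z => α₂ (s₁ z) with hff
      set gg : Z₂.carrier → Z₁.carrier := fun z => α₁ (s₂ z) with hgg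
      have hffα : ∀ y, ff (α₁ y) = α₂ y := fun y => hclaim₁₂ _ _ (hs₁e (α₁ y))
      have hggα : ∀ y, gg (α₂ y) = α₁ y := fun y => hclaim₂₁ _ _ (hs₂e (α₂ y))
      have hlinv : Function.LeftInverse gg ff := by
        intro z
        obtain ⟨y, rfl⟩ := hα₁.1.surjective z
        rw [hffα, hggα]
      have hrinv : Function.RightInverse gg ff := by
        intro z
        obtain ⟨y, rfl⟩ := hα₂.1.surjective z
        rw [hggα, hffα]
      set f : Z₁.carrier ≃ Z₂.carrier := ⟨ff, gg, hlinv, hrinv⟩ with hf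
      have hq₁ : Topology.IsQuotientMap α₁ :=
        IsClosedMap.isQuotientMap (hα₁.1.continuous.isClosedMap) hα₁.1.continuous
          hα₁.1.surjective
      have hq₂ : Topology.IsQuotientMap α₂ :=
        IsClosedMap.isQuotientMap (hα₂.1.continuous.isClosedMap) hα₂.1.continuous
          hα₂.1.surjective
      have hffc : Continuous ff := by
        rw [hq₁.continuous_iff]
        have : ff ∘ α₁ = α₂ := funext hffα
        rw [this]
        exact hα₂.1.continuous
      have hggc : Continuous gg := by
        rw [hq₂.continuous_iff]
        have : gg ∘ α₂ = α₁ := funext hggα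
        rw [this]
        exact hα₁.1.continuous
      refine ⟨f, hffc, hggc, ?_, ?_, ?_⟩
      · intro z
        obtain ⟨y, rfl⟩ := hα₁.1.surjective z
        show ff (Z₁.σ (α₁ y)) = Z₂.σ (ff (α₁ y))
        rw [← hα₁.1.commutes y, hffα, hffα, hα₂.1.commutes y]
      · intro y
        exact hffα y
      · intro z
        obtain ⟨y, rfl⟩ := hα₁.1.surjective z
        show β₂ (ff (α₁ y)) = β₁ (α₁ y)
        rw [hffα, hcomp₂, hcomp₁]
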